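/- If φ = θ₁·conj(η₁) and ψ = θ₂·conj(η₂) with θ₁, θ₂, η₁, η₂ inner functions on 𝔻ⁿ, then the semicommutator factors as T_{φψ} − T_φ T_ψ = T_{conj(η₁)} T_{conj(η₂)} T_{θ₁} P_{η₂} T_{θ₂}, where P_{η₂} = I − T_{η₂} T_{conj(η₂)} is the projection onto the model space K_{η₂}. -/

import Mathlib

open MeasureTheory Complex Filter Topology
open scoped ENNReal NNReal

noncomputable section

namespace HardyPolydisc

/-- The `n`-torus `𝕋ⁿ`, realized as the product of `n` unit additive circles,
carrying the (normalized) Haar probability measure `volume`. -/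
abbrev Torus (n : ℕ) := Fin n → AddCircle (1 : ℝ)

/-- The normalized Lebesgue (Haar) measure `m_n` on the `n`-torus. -/
abbrev torusMeasure (n : ℕ) : Measure (Torus n) := volume

/-- A point of the additive circle viewed as a complex number of modulus one. -/
def bpt (t : AddCircle (1 : ℝ)) : ℂ := (AddCircle.toCircle t : ℂ)

/-- `L²(𝕋ⁿ)`. -/
abbrev L2T (n : ℕ) := Lp ℂ 2 (torusMeasure n)

/-- The analytic monomial `e_k(ζ) = ζ₁^{k₁} ⋯ ζₙ^{kₙ}` for `k ∈ ℤ₊ⁿ`. -/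
def mon {n : ℕ} (k : Fin n → ℕ) : Torus n → ℂ := fun ζ => ∏ j, bpt (ζ j) ^ (k j)

lemma mon_memℒp {n : ℕ} (k : Fin n → ℕ) : MemLp (mon k) 2 (torusMeasure n) := by
  have hc : Continuous (mon (n := n) k) := by
    apply continuous_finset_prod
    intro j _
    exact ((continuous_subtype_val.comp AddCircle.continuous_toCircle).comp
      (continuous_apply j)).pow _
  refine MemLp.of_bound hc.aestronglyMeasurable 1 ?_
  filter_upwards with ζ
  have h : ‖mon k ζ‖ = ∏ j, ‖bpt (ζ j)‖ ^ (k j) := by simp [mon]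
  rw [h]
  have h1 : ∀ j : Fin n, ‖bpt (ζ j)‖ = 1 := by
    intro j; simp [bpt, Circle.norm_coe]
  simp [h1]

/-- The Hardy space `H²(𝔻ⁿ)`, identified (via radial boundary values) with the closed
subspace of `L²(𝕋ⁿ)` spanned by the analytic monomials. -/
def hardy (n : ℕ) : Submodule ℂ (L2T n) :=
  (Submodule.span ℂ
    (Set.range fun k : Fin n → ℕ => (mon_memℒp k).toLp (mon k))).topologicalClosure

instance (n : ℕ) : CompleteSpace (hardy n) :=
  IsClosed.completeSpace_coe (hs := Submodule.isClosed_topologicalClosure _)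

/-- Multiplication by a bounded measurable symbol `φ ∈ L^∞(𝕋ⁿ)`, as a bounded operator
on `L²(𝕋ⁿ)`. -/
def mulOp {n : ℕ} {φ : Torus n → ℂ} (hφ : MemLp φ ⊤ (torusMeasure n)) :
    L2T n →L[ℂ] L2T n :=
  LinearMap.mkContinuous
    { toFun := fun f => ((Lp.memLp f).smul (p := ⊤) (r := 2) hφ).toLp (φ • ⇑f)
      map_add' := by
        intro f g
        refine (MemLp.toLp_congr _ (((Lp.memLp f).smul (p := ⊤) (r := 2) hφ).add
          (((Lp.memLp g).smul (p := ⊤) (r := 2) hφ))) ?_).trans (MemLp.toLp_add _ _)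
        filter_upwards [Lp.coeFn_add f g] with x hx
        simp only [Pi.smul_apply, Pi.mul_apply, Pi.add_apply, smul_eq_mul, hx]
        ring
      map_smul' := by
        intro c f
        have key : MemLp.toLp (φ • ⇑(c • f)) ((Lp.memLp (c • f)).smul (p := ⊤) (r := 2) hφ)
            = c • MemLp.toLp (φ • ⇑f) ((Lp.memLp f).smul (p := ⊤) (r := 2) hφ) := by
          refine (MemLp.toLp_congr _ (((Lp.memLp f).smul (p := ⊤) (r := 2) hφ).const_smul c)
            ?_).trans (MemLp.toLp_const_smul c _)
          filter_upwards [Lp.coeFn_smul c f] with x hx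
          simp only [Pi.smul_apply, Pi.mul_apply, smul_eq_mul, hx]
          ring
        simpa using key }
    (eLpNorm φ ⊤ (torusMeasure n)).toReal
    (by
      intro f
      simp only [LinearMap.coe_mk, AddHom.coe_mk]
      rw [Lp.norm_toLp]
      have h := eLpNorm_smul_le_mul_eLpNorm (Lp.aestronglyMeasurable f) hφ.aestronglyMeasurable
        (p := ⊤) (q := 2) (r := 2)
      calc (eLpNorm (φ • ⇑f) 2 (torusMeasure n)).toReal
          ≤ ((eLpNorm φ ⊤ (torusMeasure n)) * eLpNorm (⇑f) 2 (torusMeasure n)).toReal := by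
            apply ENNReal.toReal_mono _ h
            exact ENNReal.mul_ne_top hφ.eLpNorm_ne_top (Lp.memLp f).eLpNorm_ne_top
        _ = (eLpNorm φ ⊤ (torusMeasure n)).toReal * ‖f‖ := by
            rw [ENNReal.toReal_mul, Lp.norm_def]
        )


/-- Complex conjugation preserves `ℒ^p` membership. -/
lemma memℒp_conj {α : Type*} [MeasurableSpace α] {μ : Measure α} {φ : α → ℂ} {p : ℝ≥0∞}
    (hφ : MemLp φ p μ) : MemLp (fun ζ => (starRingEnd ℂ) (φ ζ)) p μ := by
  have hm : AEStronglyMeasurable (fun ζ => (starRingEnd ℂ) (φ ζ)) μ :=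
    Complex.continuous_conj.comp_aestronglyMeasurable hφ.aestronglyMeasurable
  refine ⟨hm, ?_⟩
  have h : eLpNorm (starRingEnd ℂ ∘ φ) p μ = eLpNorm φ p μ := eLpNorm_conj (𝕜 := ℂ) φ p μ
  have h2 : (fun ζ => (starRingEnd ℂ) (φ ζ)) = starRingEnd ℂ ∘ φ := rfl
  rw [h2, h]
  exact hφ.2

/-- The product of two essentially bounded functions is essentially bounded. -/
lemma memℒp_top_mul {α : Type*} [MeasurableSpace α] {μ : Measure α} {φ ψ : α → ℂ}
    (hφ : MemLp φ ⊤ μ) (hψ : MemLp ψ ⊤ μ) : MemLp (fun ζ => φ ζ * ψ ζ) ⊤ μ := by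
  have := hψ.smul (φ := φ) (p := (⊤ : ℝ≥0∞)) (r := ⊤) hφ
  exact this

/-- The Toeplitz operator `T_φ = P_{H²} M_φ` on `H²(𝔻ⁿ)`. -/
def toeplitz {n : ℕ} {φ : Torus n → ℂ} (hφ : MemLp φ ⊤ (torusMeasure n)) :
    hardy n →L[ℂ] hardy n :=
  (Submodule.orthogonalProjectionOnto (hardy n)).comp ((mulOp hφ).comp (hardy n).subtypeL)

/-- The Hankel operator `H_φ = P_{H²⊥} M_φ : H²(𝔻ⁿ) → H²(𝔻ⁿ)^⊥`. -/
def hankel {n : ℕ} {φ : Torus n → ℂ} (hφ : MemLp φ ⊤ (torusMeasure n)) :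
    hardy n →L[ℂ] ↥(hardy n)ᗮ :=
  (Submodule.orthogonalProjectionOnto (hardy n)ᗮ).comp ((mulOp hφ).comp (hardy n).subtypeL)

/-- The Poisson kernel `P(ξ, ζ) = ∏ⱼ (1-|ξⱼ|²)/|1-ξⱼ conj(ζⱼ)|²` of the polydisc. -/
def poisson {n : ℕ} (ξ : Fin n → ℂ) (ζ : Torus n) : ℝ :=
  ∏ j, (1 - ‖ξ j‖ ^ 2) / ‖1 - ξ j * (starRingEnd ℂ) (bpt (ζ j))‖ ^ 2

/-- The boundary values of the normalized Szegő kernel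
`k_ξ(ζ) = ∏ⱼ √(1-|ξⱼ|²)/(1-conj(ξⱼ)ζⱼ)`. -/
def szego {n : ℕ} (ξ : Fin n → ℂ) : Torus n → ℂ := fun ζ =>
  ∏ j, (Real.sqrt (1 - ‖ξ j‖ ^ 2) : ℂ) / (1 - (starRingEnd ℂ) (ξ j) * bpt (ζ j))

/-- The normalized Szegő kernel as an element of `L²(𝕋ⁿ)` (defined to be `0` in the
degenerate case `ξ ∉ 𝔻ⁿ`, where its boundary values are not square-integrable). -/
def szegoLp {n : ℕ} (ξ : Fin n → ℂ) : L2T n :=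
  @dite _ (MemLp (szego ξ) 2 (torusMeasure n)) (Classical.dec _)
    (fun h => h.toLp (szego ξ)) (fun _ => 0)

/-- The Berezin transform `Ã(ξ) = ⟨A k_ξ, k_ξ⟩` of an operator on `H²(𝔻ⁿ)`
(using that `k_ξ ∈ H²(𝔻ⁿ)`, i.e. `P_{H²} k_ξ = k_ξ`). -/
def berezin {n : ℕ} (A : hardy n →L[ℂ] hardy n) (ξ : Fin n → ℂ) : ℂ :=
  inner (𝕜 := ℂ) (szegoLp ξ)
    ((A (Submodule.orthogonalProjectionOnto (hardy n) (szegoLp ξ)) : L2T n))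

/-- `F → φ` *radially*: for a.e. `ζ ∈ 𝕋ⁿ`, `F(rζ) → φ(ζ)` as `r → 1⁻`. -/
def RadialTo {n : ℕ} (F : (Fin n → ℂ) → ℂ) (φ : Torus n → ℂ) : Prop :=
  ∀ᵐ ζ ∂(torusMeasure n),
    Tendsto (fun r : ℝ => F fun j => (r : ℂ) * bpt (ζ j)) (𝓝[<] 1) (𝓝 (φ ζ))

/-! Multiplication by an analytic symbol maps `H²` into itself (check it on monomials, where
it is multiplication of power series), so `T_φ T_θ = T_{φθ}` whenever `θ` is analytic.
Dually, multiplication by `conj η` is the adjoint of multiplication by `η` and hence maps `H²ᗮ`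
into itself when `η` is analytic, which gives `T_{conj η} T_φ = T_{conj η · φ}`. Expanding
`P_{η₂}`, the right-hand side becomes `T_{conj η₁} T_{conj η₂} T_{θ₁} T_{θ₂}
- (T_{conj η₁} T_{conj η₂} T_{θ₁} T_{η₂}) (T_{conj η₂} T_{θ₂})`, and these products collapse
to `T_{φψ} - T_φ T_ψ` because `conj η₂ · η₂ = 1` a.e. -/

section

variable {n : ℕ}

lemma norm_mon (k : Fin n → ℕ) (ζ : Torus n) : ‖mon k ζ‖ = 1 := by
  simp [mon, bpt, Circle.norm_coe]

lemma memLp_top_mon (k : Fin n → ℕ) : MemLp (mon k) ⊤ (torusMeasure n) :=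
  memLp_top_of_bound (mon_memℒp k).aestronglyMeasurable 1
    (.of_forall fun ζ => (norm_mon k ζ).le)

lemma mon_toLp_mem_hardy (k : Fin n → ℕ) : (mon_memℒp k).toLp (mon k) ∈ hardy n :=
  Submodule.le_topologicalClosure _ (Submodule.subset_span ⟨k, rfl⟩)

lemma map_mem_hardy_of_forall_mon (T : L2T n →L[ℂ] L2T n)
    (hT : ∀ k, T ((mon_memℒp k).toLp (mon k)) ∈ hardy n) {f : L2T n} (hf : f ∈ hardy n) :
    T f ∈ hardy n := by
  have hclosed : IsClosed ((hardy n).comap (T : L2T n →ₗ[ℂ] L2T n) : Set (L2T n)) :=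
    (Submodule.isClosed_topologicalClosure _).preimage T.continuous
  refine Submodule.topologicalClosure_minimal _ ?_ hclosed hf
  rw [Submodule.span_le]
  rintro _ ⟨k, rfl⟩
  exact hT k

section mulOp

variable {φ ψ : Torus n → ℂ}

lemma mulOp_coeFn (hφ : MemLp φ ⊤ (torusMeasure n)) (f : L2T n) :
    mulOp hφ f =ᵐ[torusMeasure n] φ • ⇑f :=
  MemLp.coeFn_toLp ((Lp.memLp f).smul (p := ⊤) (r := 2) hφ)

lemma mulOp_congr (hφ : MemLp φ ⊤ (torusMeasure n)) (hψ : MemLp ψ ⊤ (torusMeasure n))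
    (h : φ =ᵐ[torusMeasure n] ψ) : mulOp hφ = mulOp hψ := by
  ext1 f
  apply Lp.ext
  filter_upwards [mulOp_coeFn hφ f, mulOp_coeFn hψ f, h] with ζ hφζ hψζ hζ
  simp [hφζ, hψζ, hζ]

lemma mulOp_mulOp (hφ : MemLp φ ⊤ (torusMeasure n)) (hψ : MemLp ψ ⊤ (torusMeasure n))
    (f : L2T n) : mulOp hφ (mulOp hψ f) = mulOp (memℒp_top_mul hφ hψ) f := by
  apply Lp.ext
  filter_upwards [mulOp_coeFn hφ (mulOp hψ f), mulOp_coeFn hψ f,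
    mulOp_coeFn (memℒp_top_mul hφ hψ) f] with ζ h₁ h₂ h₃
  simp only [h₁, h₃, smul_eq_mul, Pi.mul_apply, h₂]
  ring

lemma mulOp_toLp_comm (hφ : MemLp φ ⊤ (torusMeasure n)) (hψ : MemLp ψ ⊤ (torusMeasure n)) :
    mulOp hφ ((hψ.mono_exponent le_top).toLp ψ) = mulOp hψ ((hφ.mono_exponent le_top).toLp φ) := by
  apply Lp.ext
  filter_upwards [mulOp_coeFn hφ ((hψ.mono_exponent le_top).toLp ψ),
    mulOp_coeFn hψ ((hφ.mono_exponent le_top).toLp φ),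
    MemLp.coeFn_toLp (hφ.mono_exponent (le_top : (2 : ℝ≥0∞) ≤ ⊤)),
    MemLp.coeFn_toLp (hψ.mono_exponent (le_top : (2 : ℝ≥0∞) ≤ ⊤))]
    with ζ h₁ h₂ h₃ h₄
  simp only [h₁, h₂, smul_eq_mul, Pi.mul_apply, h₃, h₄]
  ring

lemma mulOp_mon_toLp_mon (k l : Fin n → ℕ) :
    mulOp (memLp_top_mon k) ((mon_memℒp l).toLp (mon l))
      = (mon_memℒp (k + l)).toLp (mon (k + l)) := by
  apply Lp.ext
  filter_upwards [mulOp_coeFn (memLp_top_mon k) ((mon_memℒp l).toLp (mon l)),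
    MemLp.coeFn_toLp (mon_memℒp l), MemLp.coeFn_toLp (mon_memℒp (k + l))] with ζ h₁ h₂ h₃
  simp only [h₁, smul_eq_mul, Pi.mul_apply, h₂, h₃, mon, Pi.add_apply, pow_add,
    Finset.prod_mul_distrib]

lemma mulOp_mem_hardy (hψ : MemLp ψ ⊤ (torusMeasure n))
    (hψa : (hψ.mono_exponent le_top).toLp ψ ∈ hardy n) {f : L2T n} (hf : f ∈ hardy n) :
    mulOp hψ f ∈ hardy n := by
  refine map_mem_hardy_of_forall_mon _ (fun k => ?_) hf
  rw [mulOp_toLp_comm hψ (memLp_top_mon k)]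
  refine map_mem_hardy_of_forall_mon _ (fun l => ?_) hψa
  rw [mulOp_mon_toLp_mon]
  exact mon_toLp_mem_hardy _

lemma inner_mulOp_conj (hφ : MemLp φ ⊤ (torusMeasure n)) (f g : L2T n) :
    inner ℂ f (mulOp (memℒp_conj hφ) g) = inner ℂ (mulOp hφ f) g := by
  rw [L2.inner_def, L2.inner_def]
  apply integral_congr_ae
  filter_upwards [mulOp_coeFn (memℒp_conj hφ) g, mulOp_coeFn hφ f] with ζ h₁ h₂
  simp only [h₁, h₂, smul_eq_mul, Pi.mul_apply, RCLike.inner_apply, map_mul]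
  ring

lemma mulOp_conj_mem_orthogonal (hφ : MemLp φ ⊤ (torusMeasure n))
    (hφa : (hφ.mono_exponent le_top).toLp φ ∈ hardy n) {g : L2T n} (hg : g ∈ (hardy n)ᗮ) :
    mulOp (memℒp_conj hφ) g ∈ (hardy n)ᗮ := by
  rw [Submodule.mem_orthogonal]
  intro f hf
  rw [inner_mulOp_conj hφ]
  exact (Submodule.mem_orthogonal _ _).mp hg _ (mulOp_mem_hardy hφ hφa hf)

end mulOp

section toeplitz

variable {φ ψ : Torus n → ℂ}

lemma toeplitz_apply (hφ : MemLp φ ⊤ (torusMeasure n)) (f : hardy n) :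
    toeplitz hφ f = (hardy n).orthogonalProjectionOnto (mulOp hφ f) := rfl

lemma toeplitz_congr (hφ : MemLp φ ⊤ (torusMeasure n)) (hψ : MemLp ψ ⊤ (torusMeasure n))
    (h : φ =ᵐ[torusMeasure n] ψ) : toeplitz hφ = toeplitz hψ := by
  rw [toeplitz, toeplitz, mulOp_congr hφ hψ h]

lemma toeplitz_mul_toeplitz_of_mem_hardy (hφ : MemLp φ ⊤ (torusMeasure n))
    (hψ : MemLp ψ ⊤ (torusMeasure n)) (hψa : (hψ.mono_exponent le_top).toLp ψ ∈ hardy n) :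
    toeplitz hφ * toeplitz hψ = toeplitz (memℒp_top_mul hφ hψ) := by
  ext1 f
  have hψf : (toeplitz hψ f : L2T n) = mulOp hψ f :=
    Submodule.starProjection_eq_self_iff.mpr (mulOp_mem_hardy hψ hψa f.2)
  rw [mul_apply_eq_comp, toeplitz_apply, hψf, mulOp_mulOp, toeplitz_apply]

lemma orthogonalProjectionOnto_mulOp_conj (hφ : MemLp φ ⊤ (torusMeasure n))
    (hφa : (hφ.mono_exponent le_top).toLp φ ∈ hardy n) (g : L2T n) :
    (hardy n).orthogonalProjectionOnto (mulOp (memℒp_conj hφ) g)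
      = (hardy n).orthogonalProjectionOnto
          (mulOp (memℒp_conj hφ) ((hardy n).orthogonalProjectionOnto g)) := by
  rw [← sub_eq_zero, ← map_sub, ← map_sub]
  exact Submodule.orthogonalProjectionOnto_apply_of_mem_orthogonal
    (mulOp_conj_mem_orthogonal hφ hφa (Submodule.sub_starProjection_mem_orthogonal g))

lemma toeplitz_conj_mul_toeplitz (hφ : MemLp φ ⊤ (torusMeasure n))
    (hφa : (hφ.mono_exponent le_top).toLp φ ∈ hardy n) (hψ : MemLp ψ ⊤ (torusMeasure n)) :
    toeplitz (memℒp_conj hφ) * toeplitz hψ = toeplitz (memℒp_top_mul (memℒp_conj hφ) hψ) := by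
  ext1 f
  rw [mul_apply_eq_comp, toeplitz_apply, toeplitz_apply, toeplitz_apply,
    ← orthogonalProjectionOnto_mulOp_conj hφ hφa, mulOp_mulOp]

end toeplitz

end

theorem semicommutator_of_inner_symbols_general {n : ℕ} {θ₁ θ₂ η₁ η₂ : Torus n → ℂ}
    (hθ₁ : MemLp θ₁ ⊤ (torusMeasure n)) (hθ₂ : MemLp θ₂ ⊤ (torusMeasure n))
    (hη₁ : MemLp η₁ ⊤ (torusMeasure n)) (hη₂ : MemLp η₂ ⊤ (torusMeasure n))
    (hη₂u : ∀ᵐ ζ ∂(torusMeasure n), ‖η₂ ζ‖ = 1)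
    (hθ₂a : (hθ₂.mono_exponent le_top).toLp θ₂ ∈ hardy n)
    (hη₁a : (hη₁.mono_exponent le_top).toLp η₁ ∈ hardy n)
    (hη₂a : (hη₂.mono_exponent le_top).toLp η₂ ∈ hardy n) :
    toeplitz (memℒp_top_mul (memℒp_top_mul hθ₁ (memℒp_conj hη₁))
        (memℒp_top_mul hθ₂ (memℒp_conj hη₂)))
      - toeplitz (memℒp_top_mul hθ₁ (memℒp_conj hη₁))
          * toeplitz (memℒp_top_mul hθ₂ (memℒp_conj hη₂))
      = toeplitz (memℒp_conj hη₁) * toeplitz (memℒp_conj hη₂) * toeplitz hθ₁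
          * (1 - toeplitz hη₂ * toeplitz (memℒp_conj hη₂)) * toeplitz hθ₂ := by
  have hη₂_conj_mul : ∀ᵐ ζ ∂(torusMeasure n), starRingEnd ℂ (η₂ ζ) * η₂ ζ = 1 := by
    filter_upwards [hη₂u] with ζ h
    rw [Complex.conj_mul', h, Complex.ofReal_one, one_pow]
  have hφψ : toeplitz (memℒp_conj hη₁) * toeplitz (memℒp_conj hη₂) * toeplitz hθ₁
      * toeplitz hθ₂ = toeplitz (memℒp_top_mul (memℒp_top_mul hθ₁ (memℒp_conj hη₁))
        (memℒp_top_mul hθ₂ (memℒp_conj hη₂))) := by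
    rw [mul_assoc, toeplitz_mul_toeplitz_of_mem_hardy hθ₁ hθ₂ hθ₂a, mul_assoc,
      toeplitz_conj_mul_toeplitz hη₂ hη₂a, toeplitz_conj_mul_toeplitz hη₁ hη₁a]
    exact toeplitz_congr _ _ (.of_forall fun ζ => by ring)
  have hφ : toeplitz (memℒp_conj hη₁) * toeplitz (memℒp_conj hη₂) * toeplitz hθ₁
      * toeplitz hη₂ = toeplitz (memℒp_top_mul hθ₁ (memℒp_conj hη₁)) := by
    rw [mul_assoc, toeplitz_mul_toeplitz_of_mem_hardy hθ₁ hη₂ hη₂a, mul_assoc,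
      toeplitz_conj_mul_toeplitz hη₂ hη₂a, toeplitz_conj_mul_toeplitz hη₁ hη₁a]
    refine toeplitz_congr _ _ ?_
    filter_upwards [hη₂_conj_mul] with ζ h
    linear_combination θ₁ ζ * starRingEnd ℂ (η₁ ζ) * h
  have hψ : toeplitz (memℒp_conj hη₂) * toeplitz hθ₂
      = toeplitz (memℒp_top_mul hθ₂ (memℒp_conj hη₂)) := by
    rw [toeplitz_conj_mul_toeplitz hη₂ hη₂a]
    exact toeplitz_congr _ _ (.of_forall fun ζ => mul_comm _ _)
  rw [← hφψ, ← hφ, ← hψ, mul_sub, mul_one, sub_mul]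
  simp only [mul_assoc]

/-- For `φ = θ₁ conj(η₁)` and `ψ = θ₂ conj(η₂)` with `θᵢ, ηᵢ` inner,
`T_{φψ} − T_φ T_ψ = T_{conj η₁} T_{conj η₂} T_{θ₁} P_{η₂} T_{θ₂}`, where
`P_{η₂} = I − T_{η₂} T_{conj η₂}`. -/
theorem semicommutator_of_inner_symbols {n : ℕ} {θ₁ θ₂ η₁ η₂ : Torus n → ℂ}
    (hθ₁ : MemLp θ₁ ⊤ (torusMeasure n)) (hθ₂ : MemLp θ₂ ⊤ (torusMeasure n))
    (hη₁ : MemLp η₁ ⊤ (torusMeasure n)) (hη₂ : MemLp η₂ ⊤ (torusMeasure n))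
    (hθ₁u : ∀ᵐ ζ ∂(torusMeasure n), ‖θ₁ ζ‖ = 1)
    (hθ₂u : ∀ᵐ ζ ∂(torusMeasure n), ‖θ₂ ζ‖ = 1)
    (hη₁u : ∀ᵐ ζ ∂(torusMeasure n), ‖η₁ ζ‖ = 1)
    (hη₂u : ∀ᵐ ζ ∂(torusMeasure n), ‖η₂ ζ‖ = 1)
    (hθ₁a : (hθ₁.mono_exponent le_top).toLp θ₁ ∈ hardy n)
    (hθ₂a : (hθ₂.mono_exponent le_top).toLp θ₂ ∈ hardy n)
    (hη₁a : (hη₁.mono_exponent le_top).toLp η₁ ∈ hardy n)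
    (hη₂a : (hη₂.mono_exponent le_top).toLp η₂ ∈ hardy n) :
    toeplitz (memℒp_top_mul (memℒp_top_mul hθ₁ (memℒp_conj hη₁))
        (memℒp_top_mul hθ₂ (memℒp_conj hη₂)))
      - toeplitz (memℒp_top_mul hθ₁ (memℒp_conj hη₁))
          * toeplitz (memℒp_top_mul hθ₂ (memℒp_conj hη₂))
      = toeplitz (memℒp_conj hη₁) * toeplitz (memℒp_conj hη₂) * toeplitz hθ₁
          * (1 - toeplitz hη₂ * toeplitz (memℒp_conj hη₂)) * toeplitz hθ₂ :=
  semicommutator_of_inner_symbols_general hθ₁ hθ₂ hη₁ hη₂ hη₂u hθ₂a hη₁a hη₂a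

end HardyPolydisc
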